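/- Let T_{n₁,…,n_t} be a 2H-tree. If t ≥ 2n_t + 2, then χ'_s(T_{n₁,…,n_t}) ≤ t. -/

import Mathlib

/-!
Colour the edge from the root to `uᵢ` with `i` and the edge from `uᵢ` to its `j`-th leaf with
`i + j + 1`, modulo `t`. The colours at `uᵢ` are `i, i + 1, …, i + nᵢ`, distinct since `nᵢ < t`.
Every path with four edges runs leaf–`uᵢ`–root–`uₖ`–leaf; if it were bicoloured, with leaves `j`
and `j'`, then `i + j + 1 ≡ k` and `k + j' + 1 ≡ i`, so `t` would divide
`0 < j + j' + 2 ≤ nᵢ + nₖ < t`.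
-/

/-- A star edge coloring of `G` with `k` colors: a proper edge coloring such that
no path or cycle of length four (four edges) is bi-colored. The walk
`a-b-x-y-z` ranges over all paths of length four (`a,b,x,y,z` distinct) and all
cycles of length four (`z = a` and `a,b,x,y` distinct). -/
def IsStarEdgeColoring {V : Type*} (G : SimpleGraph V) {k : ℕ} (c : Sym2 V → Fin k) : Prop :=
  (∀ ⦃u v w : V⦄, G.Adj u v → G.Adj u w → v ≠ w → c s(u, v) ≠ c s(u, w)) ∧
  (∀ a b x y z : V, G.Adj a b → G.Adj b x → G.Adj x y → G.Adj y z →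
    a ≠ x → a ≠ y → b ≠ y → b ≠ z → x ≠ z →
    ¬(c s(a, b) = c s(x, y) ∧ c s(b, x) = c s(y, z)))

/-- The star chromatic index of `G`: the least `k` admitting a star edge coloring. -/
noncomputable def starChromaticIndex {V : Type*} (G : SimpleGraph V) : ℕ :=
  sInf {k : ℕ | ∃ c : Sym2 V → Fin k, IsStarEdgeColoring G c}
/-- The 2H-tree `T_{n₁,…,n_t}`: a root (`none`), its `t` neighbours `uᵢ = some ⟨i, none⟩`,
and for each `i`, `n i` further leaves `some ⟨i, some j⟩` adjacent to `uᵢ`. -/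
def twoHTree (t : ℕ) (n : Fin t → ℕ) :
    SimpleGraph (Option (Σ i : Fin t, Option (Fin (n i)))) :=
  SimpleGraph.fromRel (fun x y =>
    (x = none ∧ ∃ i : Fin t, y = some ⟨i, none⟩) ∨
    (∃ (i : Fin t) (j : Fin (n i)), x = some ⟨i, none⟩ ∧ y = some ⟨i, some j⟩))

open Fin.NatCast in
theorem Fin.natCast_injOn_Iio (t : ℕ) [NeZero t] : Set.InjOn (Nat.cast : ℕ → Fin t) (Set.Iio t) :=
  fun a ha b hb hab => by
    simpa [Fin.val_cast_of_lt ha, Fin.val_cast_of_lt hb] using congrArg Fin.val hab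

open Fin.NatCast in
theorem Fin.natCast_ne_zero_of_pos_of_lt {t a : ℕ} [NeZero t] (h0 : 0 < a) (ht : a < t) :
    (a : Fin t) ≠ 0 :=
  fun h => h0.ne' (Nat.eq_zero_of_dvd_of_lt (Fin.natCast_eq_zero.1 h) ht)

theorem starChromaticIndex_le {V : Type*} {G : SimpleGraph V} {k : ℕ} {c : Sym2 V → Fin k}
    (hc : IsStarEdgeColoring G c) : starChromaticIndex G ≤ k :=
  Nat.sInf_le ⟨c, hc⟩

namespace TwoHTree

open Fin.CommRing

variable {t : ℕ} {n : Fin t → ℕ}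

abbrev Vertex (t : ℕ) (n : Fin t → ℕ) := Option (Σ i : Fin t, Option (Fin (n i)))

theorem adj_root_iff {y : Vertex t n} :
    (twoHTree t n).Adj none y ↔ ∃ i, y = some ⟨i, none⟩ := by
  unfold twoHTree
  aesop

theorem adj_middle_iff {i : Fin t} {y : Vertex t n} :
    (twoHTree t n).Adj (some ⟨i, none⟩) y ↔ y = none ∨ ∃ j, y = some ⟨i, some j⟩ := by
  unfold twoHTree
  aesop

theorem adj_leaf_iff {i : Fin t} {j : Fin (n i)} {y : Vertex t n} :
    (twoHTree t n).Adj (some ⟨i, some j⟩) y ↔ y = some ⟨i, none⟩ := by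
  unfold twoHTree
  aesop

theorem exists_eq_leaf_middle_root_middle_leaf {a b x y z : Vertex t n}
    (hab : (twoHTree t n).Adj a b) (hbx : (twoHTree t n).Adj b x)
    (hxy : (twoHTree t n).Adj x y) (hyz : (twoHTree t n).Adj y z)
    (hax : a ≠ x) (hby : b ≠ y) (hxz : x ≠ z) :
    ∃ (i k : Fin t) (j : Fin (n i)) (j' : Fin (n k)), a = some ⟨i, some j⟩ ∧
      b = some ⟨i, none⟩ ∧ x = none ∧ y = some ⟨k, none⟩ ∧ z = some ⟨k, some j'⟩ := by
  rcases x with _ | ⟨i, _ | j⟩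
  · obtain ⟨i, rfl⟩ := adj_root_iff.1 hbx.symm
    obtain ⟨k, rfl⟩ := adj_root_iff.1 hxy
    obtain rfl | ⟨j, rfl⟩ := adj_middle_iff.1 hab.symm
    · exact absurd rfl hax
    obtain rfl | ⟨j', rfl⟩ := adj_middle_iff.1 hyz
    · exact absurd rfl hxz
    exact ⟨i, k, j, j', rfl, rfl, rfl, rfl, rfl⟩
  · obtain rfl | ⟨j, rfl⟩ := adj_middle_iff.1 hbx.symm
    · obtain rfl | ⟨j', rfl⟩ := adj_middle_iff.1 hxy
      · exact absurd rfl hby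
      · exact absurd (adj_leaf_iff.1 hyz).symm hxz
    · exact absurd (adj_leaf_iff.1 hab.symm) hax
  · exact absurd ((adj_leaf_iff.1 hbx.symm).trans (adj_leaf_iff.1 hxy).symm) hby

variable [NeZero t]

def label : Vertex t n → Fin t
  | none => 0
  | some ⟨i, none⟩ => i
  | some ⟨_, some j⟩ => (j + 1 : ℕ)

def starColoring : Sym2 (Vertex t n) → Fin t :=
  Sym2.lift ⟨fun x y => label x + label y, fun _ _ => add_comm _ _⟩

theorem label_injOn_neighborSet (h : ∀ i, n i < t) (u : Vertex t n) :
    Set.InjOn label ((twoHTree t n).neighborSet u) := by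
  intro v hv w hw hvw
  simp only [SimpleGraph.mem_neighborSet] at hv hw
  rcases u with _ | ⟨i, _ | j⟩
  · obtain ⟨i, rfl⟩ := adj_root_iff.1 hv
    obtain ⟨k, rfl⟩ := adj_root_iff.1 hw
    obtain rfl : i = k := hvw
    rfl
  · have hlt (j : Fin (n i)) : (j : ℕ) + 1 ∈ Set.Iio t :=
      Set.mem_Iio.2 (by have := j.isLt; have := h i; omega)
    obtain rfl | ⟨j, rfl⟩ := adj_middle_iff.1 hv <;> obtain rfl | ⟨j', rfl⟩ := adj_middle_iff.1 hw
    · rfl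
    · exact absurd hvw.symm (Fin.natCast_ne_zero_of_pos_of_lt (Nat.succ_pos _) (hlt j'))
    · exact absurd hvw (Fin.natCast_ne_zero_of_pos_of_lt (Nat.succ_pos _) (hlt j))
    · obtain rfl : j = j' :=
        Fin.ext (Nat.succ_injective (Fin.natCast_injOn_Iio t (hlt j) (hlt j') hvw))
      rfl
  · exact (adj_leaf_iff.1 hv).trans (adj_leaf_iff.1 hw).symm

theorem starColoring_adj_ne (h : ∀ i, n i < t) ⦃u v w : Vertex t n⦄
    (huv : (twoHTree t n).Adj u v) (huw : (twoHTree t n).Adj u w) (hvw : v ≠ w) :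
    starColoring s(u, v) ≠ starColoring s(u, w) :=
  fun hc => hvw (label_injOn_neighborSet h u huv huw (add_left_cancel hc))

theorem starColoring_not_bicolored (h : ∀ i k, n i + n k < t) (a b x y z : Vertex t n)
    (hab : (twoHTree t n).Adj a b) (hbx : (twoHTree t n).Adj b x)
    (hxy : (twoHTree t n).Adj x y) (hyz : (twoHTree t n).Adj y z)
    (hax : a ≠ x) (hby : b ≠ y) (hxz : x ≠ z) :
    ¬(starColoring s(a, b) = starColoring s(x, y) ∧ starColoring s(b, x) = starColoring s(y, z)) := by
  obtain ⟨i, k, j, j', rfl, rfl, rfl, rfl, rfl⟩ :=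
    exists_eq_leaf_middle_root_middle_leaf hab hbx hxy hyz hax hby hxz
  rintro ⟨e₁, e₂⟩
  simp only [starColoring, Sym2.lift_mk, label] at e₁ e₂
  have hsum : ((j + 1 + (j' + 1) : ℕ) : Fin t) = 0 := by
    push_cast at e₁ e₂ ⊢
    linear_combination e₁ - e₂
  have := h i k
  exact Fin.natCast_ne_zero_of_pos_of_lt (by omega) (by omega) hsum

theorem isStarEdgeColoring_starColoring (h : ∀ i k, n i + n k < t) :
    IsStarEdgeColoring (twoHTree t n) (starColoring (n := n)) :=
  ⟨starColoring_adj_ne fun i => by have := h i i; omega,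
    fun a b x y z hab hbx hxy hyz hax _ hby _ hxz =>
      starColoring_not_bicolored h a b x y z hab hbx hxy hyz hax hby hxz⟩

end TwoHTree

/-- Theorem 6.3, second upper bound. For the 2H-tree `T_{n₁,…,n_t}`,
if `t ≥ 2·n_t + 2` then `χ'_s(T_{n₁,…,n_t}) ≤ t`. -/
theorem twoHTree_star_upper_bound_large_t (t : ℕ) (ht : 1 ≤ t) (n : Fin t → ℕ)
    (hn : Monotone n) (h : 2 * n ⟨t - 1, by omega⟩ + 2 ≤ t) :
    starChromaticIndex (twoHTree t n) ≤ t := by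
  have : NeZero t := ⟨by omega⟩
  have hle (i : Fin t) : n i ≤ n ⟨t - 1, by omega⟩ := hn (Fin.le_def.2 (Nat.le_sub_one_of_lt i.isLt))
  exact starChromaticIndex_le <| TwoHTree.isStarEdgeColoring_starColoring fun i k => by
    have := hle i; have := hle k; omega
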